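/- For all real x, y with y > 0, the vector F(x,y) = (√3/(2y²))·( x(1+x²+y²), (−1+(x²+y²)²)/2, (√3/3)(y²+3x²), x(−1+x²+y²), (1+(x²+y²)²)/2 ) ∈ ℝ⁵ satisfies F₁² + F₂² − F₃² − F₄² − F₅² = −1; i.e., F maps the upper half-plane into the quadric {v ∈ ℝ^{2,3} : q(v) = −1} defining pseudo-hyperbolic space ℍ^{2,2}. -/
import Mathlib

theorem F_maps_into_pseudo_hyperbolic (x y : ℝ) (hy : y > 0) :
    (Real.sqrt 3 / (2 * y ^ 2) * (x * (1 + x ^ 2 + y ^ 2))) ^ 2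
      + (Real.sqrt 3 / (2 * y ^ 2) * ((-1 + (x ^ 2 + y ^ 2) ^ 2) / 2)) ^ 2
      - (Real.sqrt 3 / (2 * y ^ 2) * ((Real.sqrt 3 / 3) * (y ^ 2 + 3 * x ^ 2))) ^ 2
      - (Real.sqrt 3 / (2 * y ^ 2) * (x * (-1 + x ^ 2 + y ^ 2))) ^ 2
      - (Real.sqrt 3 / (2 * y ^ 2) * ((1 + (x ^ 2 + y ^ 2) ^ 2) / 2)) ^ 2 = -1 := by
  have h3 : Real.sqrt 3 ^ 2 = 3 := Real.sq_sqrt (by norm_num)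
  have hy0 : y ≠ 0 := ne_of_gt hy
  have h4 : Real.sqrt 3 ^ 4 = 9 := by
    have : Real.sqrt 3 ^ 4 = (Real.sqrt 3 ^ 2) ^ 2 := by ring
    rw [this, h3]; norm_num
  field_simp
  ring_nf
  rw [h3, h4]
  ring
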